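/- arXiv:2404.02641 — 2 statements merged into one kernel-verified Lean document; each statement's English description precedes it below -/
import Mathlib

section
/- For A = (J−R)Q with J skew-symmetric, R symmetric positive semidefinite, Q symmetric positive semidefinite, and any step size h > 0, the matrix I − hA is invertible. -/
open Matrix

/-!
If `(1 - h (J - R) Q) v = 0`, put `y = Q v`, so that `v = h (J - R) y`. Pairing with `y` gives
`vᵀ Q v = yᵀ v = h yᵀ (J - R) y = -h yᵀ R y ≤ 0`, because the skew-symmetric `J` contributes
nothing. So `vᵀ Q v = 0`, which for positive semidefinite `Q` forces `Q v = 0`, and then `v = 0`.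
-/

namespace Matrix

variable {m : Type*} [Fintype m]

theorem dotProduct_mulVec_self_eq_zero_of_transpose_eq_neg {R : Type*} [CommRing R]
    [IsAddTorsionFree R] {J : Matrix m m R} (hJ : Jᵀ = -J) (y : m → R) :
    y ⬝ᵥ J *ᵥ y = 0 :=
  self_eq_neg.mp <| calc
    y ⬝ᵥ J *ᵥ y = Jᵀ *ᵥ y ⬝ᵥ y := by rw [dotProduct_mulVec, mulVec_transpose]
    _ = -(y ⬝ᵥ J *ᵥ y) := by rw [hJ, neg_mulVec, neg_dotProduct, dotProduct_comm]

theorem dotProduct_sub_mulVec_self_nonpos {J R : Matrix m m ℝ} (hJ : Jᵀ = -J)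
    (hR : R.PosSemidef) (y : m → ℝ) : y ⬝ᵥ (J - R) *ᵥ y ≤ 0 := by
  have hRy : 0 ≤ y ⬝ᵥ R *ᵥ y := by simpa using hR.dotProduct_mulVec_nonneg y
  rw [sub_mulVec, dotProduct_sub, dotProduct_mulVec_self_eq_zero_of_transpose_eq_neg hJ]
  linarith

theorem eq_zero_of_one_sub_smul_mul_mulVec_eq_zero [DecidableEq m] {M Q : Matrix m m ℝ}
    (hM : ∀ y, y ⬝ᵥ M *ᵥ y ≤ 0) (hQ : Q.PosSemidef) {h : ℝ} (hh : 0 ≤ h) {v : m → ℝ}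
    (hv : (1 - h • (M * Q)) *ᵥ v = 0) : v = 0 := by
  set y := Q *ᵥ v
  have hv_eq : v = h • (M *ᵥ y) := by
    rwa [sub_mulVec, one_mulVec, smul_mulVec, sub_eq_zero, ← mulVec_mulVec] at hv
  have hvQv : star v ⬝ᵥ Q *ᵥ v = 0 := by
    refine le_antisymm ?_ (hQ.dotProduct_mulVec_nonneg v)
    calc star v ⬝ᵥ Q *ᵥ v = y ⬝ᵥ v := by rw [star_trivial, dotProduct_comm]
      _ = h * (y ⬝ᵥ M *ᵥ y) := by rw [← smul_eq_mul, ← dotProduct_smul, ← hv_eq]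
      _ ≤ 0 := mul_nonpos_of_nonneg_of_nonpos hh (hM y)
  have hy : y = 0 := (hQ.dotProduct_mulVec_zero_iff v).mp hvQv
  rw [hv_eq, hy, mulVec_zero, smul_zero]

theorem det_one_sub_smul_mul_ne_zero [DecidableEq m] {M Q : Matrix m m ℝ}
    (hM : ∀ y, y ⬝ᵥ M *ᵥ y ≤ 0) (hQ : Q.PosSemidef) {h : ℝ} (hh : 0 ≤ h) :
    (1 - h • (M * Q)).det ≠ 0 := fun hdet ↦ by
  obtain ⟨v, hv_ne, hv⟩ := exists_mulVec_eq_zero_iff.mpr hdet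
  exact hv_ne (eq_zero_of_one_sub_smul_mul_mulVec_eq_zero hM hQ hh hv)

end Matrix

/-- For `A = (J - R) Q` with `J` skew-symmetric, `R, Q` symmetric positive semidefinite and
any step size `h > 0`, the matrix `I - h A` is invertible. -/
theorem implicit_euler_invertible
    {n : ℕ} (J R Q : Matrix (Fin n) (Fin n) ℝ)
    (hJ : Jᵀ = -J) (hR : R.PosSemidef) (hQ : Q.PosSemidef)
    (h : ℝ) (hh : 0 < h) :
    ((1 : Matrix (Fin n) (Fin n) ℝ) - h • ((J - R) * Q)).det ≠ 0 :=
  det_one_sub_smul_mul_ne_zero (dotProduct_sub_mulVec_self_nonpos hJ hR) hQ hh.le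
end

section
/- The evaluation map E : H¹([0,T], ℝⁿ) → L²([0,T], ℝⁿ) × (ℝⁿ)^{M+1}, φ ↦ (φ, φ(t₀), …, φ(t_M)), has dense range, where 0 = t₀ < t₁ < … < t_M = T. -/
/-!
Smooth functions are dense in `L²`, and a smooth function can be corrected to take prescribed
values at finitely many distinct nodes by adding multiples of bump functions centred at the
nodes. A bump of height `‖a‖` supported in a ball of radius `δ` has `Lᵖ` norm at most
`‖a‖ (2δ)^{1/p}`, so for `δ` small (and below the minimal gap between nodes) the correction is
arbitrarily small in `L²` while it matches the node values exactly.
-/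

open Matrix MeasureTheory Filter Topology Metric
open scoped ENNReal ContDiff

namespace ContDiffBump

variable {X E : Type*} [NormedAddCommGroup X] [NormedSpace ℝ X] [HasContDiffBump X]
  [NormedAddCommGroup E] [NormedSpace ℝ E]

theorem eLpNorm_smul_const_le [MeasurableSpace X] [OpensMeasurableSpace X] {c : X}
    (f : ContDiffBump c) (a : E) (p : ℝ≥0∞) (μ : Measure X) :
    eLpNorm (fun x => f x • a) p μ ≤ ‖a‖ₑ * μ (ball c f.rOut) ^ p.toReal⁻¹ := by
  have hsupp : (fun x => f x • a).support ⊆ ball c f.rOut :=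
    (Function.support_smul_subset_left _ _).trans f.support_eq.subset
  rw [← eLpNorm_restrict_eq_of_support_subset hsupp, ← Measure.restrict_apply_univ]
  refine eLpNorm_le_of_ae_enorm_bound (Eventually.of_forall fun x => ?_)
  rw [enorm_smul, Real.enorm_eq_ofReal f.nonneg]
  exact mul_le_of_le_one_left' (ENNReal.ofReal_le_one.2 f.le_one)

theorem sum_smul_apply_eq_of_rOut_le_dist {ι : Type*} [Fintype ι] [DecidableEq ι] {t : ι → X}
    (f : ∀ i, ContDiffBump (t i)) (hsep : ∀ i j, i ≠ j → (f j).rOut ≤ dist (t i) (t j))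
    (a : ι → E) (i : ι) : ∑ j, f j (t i) • a j = a i := by
  rw [Finset.sum_eq_single i
      (fun j _ hji => by rw [(f j).zero_of_le_dist (hsep i j hji.symm), zero_smul])
      (fun hi => absurd (Finset.mem_univ i) hi),
    (f i).one_of_mem_closedBall (mem_closedBall_self (f i).rIn_pos.le), one_smul]

end ContDiffBump

theorem exists_contDiff_interpolating_eLpNorm_lt {ι E : Type*} [Finite ι] [NormedAddCommGroup E]
    [NormedSpace ℝ E] {t : ι → ℝ} (ht : Function.Injective t) (a : ι → E) {p : ℝ≥0∞}
    (hp1 : 1 ≤ p) (hp : p ≠ ⊤) {ε : ℝ≥0∞} (hε : 0 < ε) :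
    ∃ ψ : ℝ → E, ContDiff ℝ ∞ ψ ∧ (∀ i, ψ (t i) = a i) ∧ eLpNorm ψ p volume < ε := by
  classical
  have := Fintype.ofFinite ι
  have hsep : ∀ᶠ δ in 𝓝[>] (0 : ℝ), ∀ i j, i ≠ j → δ ≤ dist (t i) (t j) := by
    refine eventually_all.2 fun i => eventually_all.2 fun j => ?_
    rcases eq_or_ne i j with rfl | hij
    · exact Eventually.of_forall fun _ hii => absurd rfl hii
    · filter_upwards [nhdsWithin_le_nhds (eventually_le_nhds (dist_pos.2 (ht.ne hij)))]
        with δ hδ _ using hδ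
  have hsmall :
      ∀ᶠ δ in 𝓝[>] (0 : ℝ), (∑ i, ‖a i‖ₑ) * ENNReal.ofReal (2 * δ) ^ p.toReal⁻¹ < ε := by
    have hp0 : 0 < p.toReal⁻¹ :=
      inv_pos.2 (ENNReal.toReal_pos (zero_lt_one.trans_le hp1).ne' hp)
    have hball : Tendsto (fun δ : ℝ => ENNReal.ofReal (2 * δ) ^ p.toReal⁻¹) (𝓝 0) (𝓝 0) := by
      have hcont : Continuous fun δ : ℝ => ENNReal.ofReal (2 * δ) ^ p.toReal⁻¹ :=
        ENNReal.continuous_rpow_const.comp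
          (ENNReal.continuous_ofReal.comp (continuous_const_mul 2))
      simpa [ENNReal.zero_rpow_of_pos hp0] using hcont.tendsto 0
    have hlim := ENNReal.Tendsto.const_mul hball
      (Or.inr (ENNReal.sum_ne_top.2 fun i _ => enorm_ne_top) : (0 : ℝ≥0∞) ≠ 0 ∨ ∑ i, ‖a i‖ₑ ≠ ⊤)
    rw [mul_zero] at hlim
    exact (hlim.eventually (gt_mem_nhds hε)).filter_mono nhdsWithin_le_nhds
  obtain ⟨δ, hδsep, hδsmall, hδ⟩ := (hsep.and (hsmall.and self_mem_nhdsWithin)).exists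
  let b i : ContDiffBump (t i) := ⟨δ / 2, δ, half_pos hδ, half_lt_self hδ⟩
  refine ⟨fun x => ∑ i, b i x • a i,
    ContDiff.sum fun i _ => ContDiff.smul (b i).contDiff contDiff_const,
    ContDiffBump.sum_smul_apply_eq_of_rOut_le_dist b hδsep a, ?_⟩
  calc eLpNorm (fun x => ∑ i, b i x • a i) p volume
      ≤ ∑ i, eLpNorm (fun x => b i x • a i) p volume := by
        simpa only [Finset.sum_fn] using eLpNorm_sum_le (f := fun i x => b i x • a i)
          (fun i _ => ((b i).continuous.smul continuous_const).aestronglyMeasurable) hp1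
    _ ≤ ∑ i, ‖a i‖ₑ * ENNReal.ofReal (2 * δ) ^ p.toReal⁻¹ := by
        gcongr with i
        refine ((b i).eLpNorm_smul_const_le _ _ _).trans_eq ?_
        rw [Real.volume_ball]
    _ = (∑ i, ‖a i‖ₑ) * ENNReal.ofReal (2 * δ) ^ p.toReal⁻¹ := (Finset.sum_mul _ _ _).symm
    _ < ε := hδsmall

theorem ContinuousOn.memLp_restrict_of_isCompact {X E : Type*} [TopologicalSpace X] [T2Space X]
    [MeasurableSpace X] [OpensMeasurableSpace X] [NormedAddCommGroup E] {μ : Measure X}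
    [IsFiniteMeasureOnCompacts μ] {s : Set X} (hs : IsCompact s) {f : X → E}
    (hf : ContinuousOn f s) (p : ℝ≥0∞) : MemLp f p (μ.restrict s) := by
  have : IsFiniteMeasure (μ.restrict s) := isFiniteMeasure_restrict.2 hs.measure_lt_top.ne
  obtain ⟨C, hC⟩ := hs.exists_bound_of_continuousOn hf
  exact .of_bound (hf.aestronglyMeasurable_of_isCompact hs hs.measurableSet) C
    (ae_restrict_of_forall_mem hs.measurableSet hC)

theorem evaluation_map_dense_range_general
    {n M : ℕ} (T : ℝ) (t : Fin (M + 1) → ℝ)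
    (htmono : StrictMono t)
    (g : ℝ → Fin n → ℝ) (hg : MemLp g 2 (volume.restrict (Set.Icc (0 : ℝ) T)))
    (v : Fin (M + 1) → Fin n → ℝ) (ε : ℝ) (hε : 0 < ε) :
    ∃ φ Dφ : ℝ → Fin n → ℝ,
      (∀ s ∈ Set.Icc (0 : ℝ) T, φ s = φ 0 + ∫ τ in (0 : ℝ)..s, Dφ τ) ∧
      MemLp Dφ 2 (volume.restrict (Set.Icc (0 : ℝ) T)) ∧
      eLpNorm (fun s => φ s - g s) 2 (volume.restrict (Set.Icc (0 : ℝ) T))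
        < ENNReal.ofReal ε ∧
      ∀ i : Fin (M + 1), Real.sqrt ((φ (t i) - v i) ⬝ᵥ (φ (t i) - v i)) < ε := by
  set μ := volume.restrict (Set.Icc (0 : ℝ) T)
  obtain ⟨φ₀, -, hφ₀, hgφ₀⟩ :=
    hg.exist_eLpNorm_sub_le ENNReal.ofNat_ne_top one_le_two (half_pos hε)
  obtain ⟨ψ, hψ, hψt, hψε⟩ := exists_contDiff_interpolating_eLpNorm_lt htmono.injective
    (fun i => v i - φ₀ (t i)) one_le_two ENNReal.ofNat_ne_top (ENNReal.ofReal_pos.2 (half_pos hε))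
  have hφ : ContDiff ℝ 1 (φ₀ + ψ) := (hφ₀.add hψ).of_le (by norm_num)
  refine ⟨φ₀ + ψ, deriv (φ₀ + ψ), fun s _ => ?_,
    (hφ.continuous_deriv le_rfl).continuousOn.memLp_restrict_of_isCompact isCompact_Icc 2, ?_,
    fun i => by simpa [hψt] using hε⟩
  · rw [intervalIntegral.integral_deriv_of_contDiffOn_uIcc hφ.contDiffOn, add_sub_cancel]
  · have hsplit : (fun s => (φ₀ + ψ) s - g s) = ψ - (g - φ₀) := by
      funext s
      simp only [Pi.add_apply, Pi.sub_apply]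
      abel
    calc eLpNorm (fun s => (φ₀ + ψ) s - g s) 2 μ
        ≤ eLpNorm (g - φ₀) 2 μ + eLpNorm ψ 2 μ := by
          rw [hsplit, add_comm]
          exact eLpNorm_sub_le hψ.continuous.aestronglyMeasurable
            (hg.1.sub hφ₀.continuous.aestronglyMeasurable) one_le_two
      _ < ENNReal.ofReal (ε / 2) + ENNReal.ofReal (ε / 2) :=
          ENNReal.add_lt_add_of_le_of_lt (ne_top_of_le_ne_top ENNReal.ofReal_ne_top hgφ₀) hgφ₀
            ((eLpNorm_mono_measure _ Measure.restrict_le_self).trans_lt hψε)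
      _ = ENNReal.ofReal ε := by
          rw [← ENNReal.ofReal_add (half_pos hε).le (half_pos hε).le, add_halves]

/-- The evaluation map `E : H¹([0,T],ℝⁿ) → L²([0,T],ℝⁿ) × (ℝⁿ)^{M+1}`,
`φ ↦ (φ, φ(t₀), …, φ(t_M))`, has dense range: any `g ∈ L²` together with any prescribed
node values `v` can be simultaneously approximated to accuracy `ε` by an `H¹` function
(represented by a continuous representative `φ` with square-integrable weak derivative `Dφ`). -/
theorem evaluation_map_dense_range
    {n M : ℕ} (T : ℝ) (hT : 0 < T) (t : Fin (M + 1) → ℝ)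
    (htmono : StrictMono t) (ht0 : t 0 = 0) (htM : t (Fin.last M) = T)
    (g : ℝ → Fin n → ℝ) (hg : MemLp g 2 (volume.restrict (Set.Icc (0 : ℝ) T)))
    (v : Fin (M + 1) → Fin n → ℝ) (ε : ℝ) (hε : 0 < ε) :
    ∃ φ Dφ : ℝ → Fin n → ℝ,
      (∀ s ∈ Set.Icc (0 : ℝ) T, φ s = φ 0 + ∫ τ in (0 : ℝ)..s, Dφ τ) ∧
      MemLp Dφ 2 (volume.restrict (Set.Icc (0 : ℝ) T)) ∧
      eLpNorm (fun s => φ s - g s) 2 (volume.restrict (Set.Icc (0 : ℝ) T))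
        < ENNReal.ofReal ε ∧
      ∀ i : Fin (M + 1), Real.sqrt ((φ (t i) - v i) ⬝ᵥ (φ (t i) - v i)) < ε :=
  evaluation_map_dense_range_general T t htmono g hg v ε hε
end
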